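/- For every spatial SGF-quantale Q, the canonical map α : Q → P(I/∼), defined by α(a) = {[p,f] : a ≰ I_{[p,f]}}, is an injective homomorphism of unital involutive quantales: it preserves arbitrary joins, multiplication, involution, sends e to the set of units u[G₀] and 1 to all of G₁ = I/∼. -/
import Mathlib


/-- A unital involutive quantale. The multiplicative unit `1` plays the role of `e`. -/
class UIQuantale (Q : Type*) extends CompleteLattice Q, Monoid Q, StarMul Q where
  mul_sSup : ∀ (a : Q) (s : Set Q), a * sSup s = ⨆ b ∈ s, a * b
  sSup_mul : ∀ (a : Q) (s : Set Q), sSup s * a = ⨆ b ∈ s, b * a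
  star_sSup : ∀ (s : Set Q), star (sSup s) = ⨆ b ∈ s, star b

/-- A partial unit: both `f` and `star f` are functional. -/
def IsPU {Q : Type*} [UIQuantale Q] (f : Q) : Prop :=
  star f * f ≤ 1 ∧ f * star f ≤ 1

/-- A prime element of `Q_e`. -/
def IsPrimeE {Q : Type*} [UIQuantale Q] (p : Q) : Prop :=
  p ≤ 1 ∧ p ≠ 1 ∧ ∀ h k : Q, h ≤ 1 → k ≤ 1 → h ⊓ k ≤ p → h ≤ p ∨ k ≤ p

/-- An SGF-quantale: a unital involutive quantale which is join-generated by its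
partial units (SGF1), satisfies `f = f f* f` for partial units (SGF2), and the
separation axiom SGF3. -/
class SGFQuantale (Q : Type*) extends UIQuantale Q where
  sgf1 : ∀ a : Q, a = sSup {f | IsPU f ∧ f ≤ a}
  sgf2 : ∀ f : Q, IsPU f → f * star f * f = f
  sgf3 : ∀ f g h : Q, IsPU f → IsPU g → h ≤ 1 → f ≤ h * ⊤ ⊔ g → f ≤ h * f ⊔ g

/-- The incidence relation: `f` and `g` are incident at `p` if some `h ≤ d(f) ⊓ d(g)`
with `h ≰ p` satisfies `h f ≤ p f ⊔ g`. -/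
def Incident {Q : Type*} [SGFQuantale Q] (p f g : Q) : Prop :=
  ∃ h : Q, h ≤ (f * star f) ⊓ (g * star g) ∧ ¬ h ≤ p ∧ h * f ≤ p * f ⊔ g

/-- The incidence domain: pairs `(p, f)` with `p` prime in `Q_e`, `f` a partial unit,
and `d(f) = f f* ≰ p`. -/
def IncDom (Q : Type*) [SGFQuantale Q] :=
  {pf : Q × Q // IsPrimeE pf.1 ∧ IsPU pf.2 ∧ ¬ pf.2 * star pf.2 ≤ pf.1}

/-- The incidence relation on the incidence domain. -/
def IncRel (Q : Type*) [SGFQuantale Q] (a b : IncDom Q) : Prop :=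
  a.1.1 = b.1.1 ∧ Incident a.1.1 a.1.2 b.1.2

/-- `I_{[p,f]}`: the join of all partial units `g` with `d(g) ≤ p` or `g` not
incident to `f` at `p`. -/
def Ibig {Q : Type*} [SGFQuantale Q] (p f : Q) : Q :=
  sSup {g | IsPU g ∧ (g * star g ≤ p ∨ ¬ Incident p g f)}

/-- Spatiality: (SPQ1) `f ≰ I_{[p,f]}` for every `(p,f)` in the incidence domain;
(SPQ2) every `a` is the meet of all the `I_{[p,f]}` above it. -/
def IsSpatial (Q : Type*) [SGFQuantale Q] : Prop :=
  (∀ p f : Q, IsPrimeE p → IsPU f → ¬ f * star f ≤ p → ¬ f ≤ Ibig p f) ∧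
  (∀ a : Q, a = sInf {x | ∃ p f : Q, IsPrimeE p ∧ IsPU f ∧ ¬ f * star f ≤ p ∧
      x = Ibig p f ∧ a ≤ x})

/-- The canonical map `α : Q → P(I/∼)`, `α(a) = {[p,f] : a ≰ I_{[p,f]}}`. -/
def alphaMap (Q : Type*) [SGFQuantale Q] (a : Q) : Set (Quot (IncRel Q)) :=
  {z | ∃ x : IncDom Q, z = Quot.mk (IncRel Q) x ∧ ¬ a ≤ Ibig x.1.1 x.1.2}

/-- The product of `P(I/∼)` lifted from the groupoid `G(Q)`:
`[p,f]·[q,g] = [p, f g]` whenever `q = f[p]`. -/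
def qMul (Q : Type*) [SGFQuantale Q] (A B : Set (Quot (IncRel Q))) :
    Set (Quot (IncRel Q)) :=
  {z | ∃ x y w : IncDom Q, Quot.mk (IncRel Q) x ∈ A ∧ Quot.mk (IncRel Q) y ∈ B ∧
      x.1.1 * x.1.2 = x.1.2 * y.1.1 ∧ w.1 = (x.1.1, x.1.2 * y.1.2) ∧
      z = Quot.mk (IncRel Q) w}

/-- The involution of `P(I/∼)` lifted from `G(Q)`: `[p,f]* = [f[p], f*]`. -/
def qStar (Q : Type*) [SGFQuantale Q] (A : Set (Quot (IncRel Q))) :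
    Set (Quot (IncRel Q)) :=
  {z | ∃ x w : IncDom Q, Quot.mk (IncRel Q) x ∈ A ∧
      x.1.1 * x.1.2 = x.1.2 * w.1.1 ∧ w.1.2 = star x.1.2 ∧
      z = Quot.mk (IncRel Q) w}

namespace SGF
variable {Q : Type*} [SGFQuantale Q]

lemma mul_Sup (a : Q) (s : Set Q) : a * sSup s = ⨆ b ∈ s, a * b := UIQuantale.mul_sSup a s
lemma Sup_mul (a : Q) (s : Set Q) : sSup s * a = ⨆ b ∈ s, b * a := UIQuantale.sSup_mul a s

lemma mul_sup (a b c : Q) : a * (b ⊔ c) = a * b ⊔ a * c := by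
  have h : b ⊔ c = sSup {b, c} := by simp
  rw [h, mul_Sup]
  simp [iSup_or, iSup_sup_eq]

lemma sup_mul (a b c : Q) : (b ⊔ c) * a = b * a ⊔ c * a := by
  have h : b ⊔ c = sSup {b, c} := by simp
  rw [h, Sup_mul]
  simp [iSup_or, iSup_sup_eq]

lemma mul_mono {a b c d : Q} (h1 : a ≤ c) (h2 : b ≤ d) : a * b ≤ c * d := by
  have e1 : c * d = c * b ⊔ c * d := by rw [← mul_sup, sup_of_le_right h2]
  have e2 : c * b = a * b ⊔ c * b := by rw [← sup_mul, sup_of_le_right h1]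
  calc a * b ≤ c * b := by rw [e2]; exact le_sup_left
    _ ≤ c * d := by rw [e1]; exact le_sup_left

lemma mul_bot (a : Q) : a * (⊥ : Q) = ⊥ := by
  have h : (⊥ : Q) = sSup (∅ : Set Q) := by simp
  rw [h, mul_Sup]; simp

lemma bot_mul (a : Q) : (⊥ : Q) * a = ⊥ := by
  have h : (⊥ : Q) = sSup (∅ : Set Q) := by simp
  rw [h, Sup_mul]; simp

lemma star_sup (a b : Q) : star (a ⊔ b) = star a ⊔ star b := by
  have h : a ⊔ b = sSup {a, b} := by simp
  rw [h, UIQuantale.star_sSup]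
  simp [iSup_or, iSup_sup_eq]

lemma star_mono {a b : Q} (h : a ≤ b) : star a ≤ star b := by
  have hb : star b = star a ⊔ star b := by
    rw [← star_sup, sup_of_le_right h]
  rw [hb]; exact le_sup_left

lemma star_top : star (⊤ : Q) = ⊤ := by
  apply top_unique
  have : (⊤ : Q) = star (star (⊤ : Q)) := (star_star _).symm
  nth_rewrite 1 [this]
  exact star_mono le_top

lemma pu_bot : IsPU (⊥ : Q) := by
  constructor <;> simp [mul_bot, bot_mul]

lemma pu_one : IsPU (1 : Q) := by constructor <;> simp

lemma pu_star {f : Q} (hf : IsPU f) : IsPU (star f) := by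
  refine ⟨?_, ?_⟩
  · rw [star_star]; exact hf.2
  · rw [star_star]; exact hf.1

lemma pu_mul {f g : Q} (hf : IsPU f) (hg : IsPU g) : IsPU (f * g) := by
  constructor
  · have : star (f * g) * (f * g) = star g * (star f * f) * g := by
      rw [star_mul]; simp [mul_assoc]
    rw [this]
    calc star g * (star f * f) * g ≤ star g * 1 * g := mul_mono (mul_mono le_rfl hf.1) le_rfl
      _ = star g * g := by rw [mul_one]
      _ ≤ 1 := hg.1
  · have : (f * g) * star (f * g) = f * (g * star g) * star f := by
      rw [star_mul]; simp [mul_assoc]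
    rw [this]
    calc f * (g * star g) * star f ≤ f * 1 * star f := mul_mono (mul_mono le_rfl hg.2) le_rfl
      _ = f * star f := by rw [mul_one]
      _ ≤ 1 := hf.2

lemma pu_of_le_one {a : Q} (h : a ≤ 1) : IsPU a := by
  have hs : star a ≤ 1 := by
    have := star_mono h; rwa [star_one] at this
  exact ⟨le_trans (mul_mono hs h) (by simp), le_trans (mul_mono h hs) (by simp)⟩

end SGF
namespace SGF
variable {Q : Type*} [SGFQuantale Q]

lemma sgf1' (a : Q) : a = sSup {f : Q | IsPU f ∧ f ≤ a} := SGFQuantale.sgf1 a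

lemma le_of_pu_le {a b : Q} (h : ∀ f : Q, IsPU f → f ≤ a → f ≤ b) : a ≤ b := by
  nth_rewrite 1 [sgf1' a]
  exact sSup_le (fun f hf => h f hf.1 hf.2)

lemma exists_pu_not_le {a b : Q} (h : ¬ a ≤ b) : ∃ f : Q, IsPU f ∧ f ≤ a ∧ ¬ f ≤ b := by
  by_contra hc
  push_neg at hc
  exact h (le_of_pu_le hc)

/-- a partial unit below 1 is an idempotent self-adjoint element -/
lemma pu_le_one_proj {f : Q} (hf : IsPU f) (h1 : f ≤ 1) : f * f = f ∧ star f = f := by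
  have hs1 : star f ≤ 1 := by have := star_mono h1; rwa [star_one] at this
  have hd : f * star f = f := by
    apply le_antisymm
    · calc f * star f ≤ f * 1 := mul_mono le_rfl hs1
        _ = f := mul_one f
    · calc f = f * star f * f := (SGFQuantale.sgf2 f hf).symm
        _ ≤ f * star f * 1 := mul_mono le_rfl h1
        _ = f * star f := mul_one _
  have hstar : star f = f := by
    have h2 : star (f * star f) = star f := congrArg star hd
    rw [star_mul, star_star, hd] at h2
    exact h2.symm
  refine ⟨?_, hstar⟩
  calc f * f = f * star f := by rw [hstar]
    _ = f := hd

lemma e_star {a : Q} (h : a ≤ 1) : star a = a := by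
  conv_lhs => rw [sgf1' a]
  rw [UIQuantale.star_sSup]
  apply le_antisymm
  · apply iSup_le; intro f; apply iSup_le; intro hf
    have : star f = f := (pu_le_one_proj hf.1 (le_trans hf.2 h)).2
    rw [this]
    exact hf.2
  · apply le_of_pu_le; intro f hf hfa
    have hsf : star f = f := (pu_le_one_proj hf (le_trans hfa h)).2
    calc f = star f := hsf.symm
      _ ≤ ⨆ b ∈ {f : Q | IsPU f ∧ f ≤ a}, star b := le_biSup _ ⟨hf, hfa⟩

lemma e_idem {a : Q} (h : a ≤ 1) : a * a = a := by
  apply le_antisymm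
  · calc a * a ≤ a * 1 := mul_mono le_rfl h
      _ = a := mul_one a
  · apply le_of_pu_le; intro f hf hfa
    have : f * f = f := (pu_le_one_proj hf (le_trans hfa h)).1
    calc f = f * f := this.symm
      _ ≤ a * a := mul_mono hfa hfa

lemma e_mul {a b : Q} (ha : a ≤ 1) (hb : b ≤ 1) : a * b = a ⊓ b := by
  apply le_antisymm
  · exact le_inf (by calc a * b ≤ a * 1 := mul_mono le_rfl hb
                      _ = a := mul_one a)
                 (by calc a * b ≤ 1 * b := mul_mono ha le_rfl
                      _ = b := one_mul b)
  · have hi : a ⊓ b ≤ 1 := le_trans inf_le_left ha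
    calc a ⊓ b = (a ⊓ b) * (a ⊓ b) := (e_idem hi).symm
      _ ≤ a * b := mul_mono inf_le_left inf_le_right

lemma e_comm {a b : Q} (ha : a ≤ 1) (hb : b ≤ 1) : a * b = b * a := by
  rw [e_mul ha hb, e_mul hb ha, inf_comm]

lemma e_absorb {a b : Q} (ha : a ≤ b) (hb : b ≤ 1) : a * b = a := by
  rw [e_mul (le_trans ha hb) hb]
  exact inf_of_le_left ha

lemma e_absorb' {a b : Q} (ha : a ≤ b) (hb : b ≤ 1) : b * a = a := by
  rw [e_comm hb (le_trans ha hb)]; exact e_absorb ha hb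

/-- SGF3, right-handed variant. -/
lemma sgf3r {f g h : Q} (hf : IsPU f) (hg : IsPU g) (hh : h ≤ 1)
    (hle : f ≤ ⊤ * h ⊔ g) : f ≤ f * h ⊔ g := by
  have h1 : star f ≤ star (⊤ * h ⊔ g) := star_mono hle
  rw [star_sup, star_mul, star_top, e_star hh] at h1
  have h2 := SGFQuantale.sgf3 (star f) (star g) h (pu_star hf) (pu_star hg) hh h1
  have h3 := star_mono h2
  rw [star_sup, star_mul, star_star, star_star, e_star hh] at h3
  exact h3

/-- Locality: for `a ≤ 1`, `g ⊓ a⊤ ≤ a g`. -/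
lemma locality {a : Q} (ha : a ≤ 1) (g : Q) : g ⊓ a * ⊤ ≤ a * g := by
  apply le_of_pu_le; intro k hk hkle
  have h1 : k ≤ a * ⊤ ⊔ ⊥ := by rw [sup_bot_eq]; exact le_trans hkle inf_le_right
  have h2 := SGFQuantale.sgf3 k ⊥ a hk pu_bot ha h1
  rw [sup_bot_eq] at h2
  exact le_trans h2 (mul_mono le_rfl (le_trans hkle inf_le_left))

end SGF
namespace SGF
variable {Q : Type*} [SGFQuantale Q]

/-- `f[p]`, transport of `p` along the partial unit `f`. -/
def qAct (f p : Q) : Q := sSup {x : Q | x ≤ 1 ∧ f * x ≤ p * f}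

lemma qAct_le_one (f p : Q) : qAct f p ≤ 1 := sSup_le (fun _ hx => hx.1)

lemma mul_qAct_le (f p : Q) : f * qAct f p ≤ p * f := by
  rw [qAct, mul_Sup]
  exact iSup_le fun x => iSup_le fun hx => hx.2

lemma le_qAct {f p x : Q} (hx : x ≤ 1) (h : f * x ≤ p * f) : x ≤ qAct f p :=
  le_sSup ⟨hx, h⟩

lemma d_le_one {f : Q} (hf : IsPU f) : f * star f ≤ 1 := hf.2
lemma r_le_one {f : Q} (hf : IsPU f) : star f * f ≤ 1 := hf.1

lemma f_mul_r {f : Q} (hf : IsPU f) : f * (star f * f) = f := by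
  rw [← mul_assoc]; exact SGFQuantale.sgf2 f hf

lemma d_mul_f {f : Q} (hf : IsPU f) : (f * star f) * f = f := SGFQuantale.sgf2 f hf

/-- `p f = f f[p]` for `p ≤ 1`. -/
lemma qAct_spec {f p : Q} (hp : p ≤ 1) (hf : IsPU f) : p * f = f * qAct f p := by
  apply le_antisymm
  · have hx0 : p * f = f * (star f * (p * f)) := by
      calc p * f = p * ((f * star f) * f) := by rw [d_mul_f hf]
        _ = (p * (f * star f)) * f := by rw [← mul_assoc]
        _ = ((f * star f) * p) * f := by rw [e_comm hp (d_le_one hf)]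
        _ = f * (star f * (p * f)) := by simp [mul_assoc]
    rw [hx0]
    apply mul_mono le_rfl
    apply le_qAct
    · calc star f * (p * f) ≤ star f * (1 * f) := mul_mono le_rfl (mul_mono hp le_rfl)
        _ = star f * f := by rw [one_mul]
        _ ≤ 1 := r_le_one hf
    · rw [← hx0]
  · exact mul_qAct_le f p

lemma f_le_pf_absurd {f p : Q} (hp : p ≤ 1) (hf : IsPU f) (hd : ¬ f * star f ≤ p)
    (h : f ≤ p * f) : False := by
  apply hd
  calc f * star f ≤ (p * f) * star f := mul_mono h le_rfl
    _ = p * (f * star f) := by rw [mul_assoc]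
    _ ≤ p * 1 := mul_mono le_rfl (d_le_one hf)
    _ = p := mul_one p

lemma r_not_le_qAct {f p : Q} (hp : p ≤ 1) (hf : IsPU f) (hd : ¬ f * star f ≤ p) :
    ¬ star f * f ≤ qAct f p := by
  intro hle
  apply f_le_pf_absurd hp hf hd
  calc f = f * (star f * f) := (f_mul_r hf).symm
    _ ≤ f * qAct f p := mul_mono le_rfl hle
    _ ≤ p * f := mul_qAct_le f p

/-- conjugation sandwich: `f* (f h f*) f = (f* f) ⊓ h` for `h ≤ 1`. -/
lemma conj_back {f h : Q} (hf : IsPU f) (hh : h ≤ 1) :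
    star f * (f * h * star f) * f = (star f * f) ⊓ h := by
  have hr : star f * f ≤ 1 := r_le_one hf
  calc star f * (f * h * star f) * f
      = (star f * f) * (h * (star f * f)) := by simp [mul_assoc]
    _ = (star f * f) * (h ⊓ (star f * f)) := by rw [e_mul hh hr]
    _ = (star f * f) ⊓ (h ⊓ (star f * f)) := e_mul hr (le_trans inf_le_left hh)
    _ = (star f * f) ⊓ h := by rw [inf_comm h, ← inf_assoc, inf_idem]

lemma conj_le_one {f h : Q} (hf : IsPU f) (hh : h ≤ 1) : f * h * star f ≤ 1 := by
  calc f * h * star f ≤ f * 1 * star f := mul_mono (mul_mono le_rfl hh) le_rfl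
    _ = f * star f := by rw [mul_one]
    _ ≤ 1 := d_le_one hf

/-- `f h = f (f* f ⊓ h)` -/
lemma f_mul_localize {f h : Q} (hf : IsPU f) (hh : h ≤ 1) :
    f * h = (f * h * star f) * f := by
  have hr : star f * f ≤ 1 := r_le_one hf
  calc f * h = (f * (star f * f)) * h := by rw [f_mul_r hf]
    _ = f * ((star f * f) * h) := by rw [mul_assoc]
    _ = f * (h * (star f * f)) := by rw [e_comm hr hh]
    _ = (f * h * star f) * f := by simp [mul_assoc]

lemma qAct_prime {f p : Q} (hp : IsPrimeE p) (hf : IsPU f) (hd : ¬ f * star f ≤ p) :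
    IsPrimeE (qAct f p) := by
  have hp1 : p ≤ 1 := hp.1
  refine ⟨qAct_le_one f p, ?_, ?_⟩
  · intro h1
    exact r_not_le_qAct hp1 hf hd (h1 ▸ r_le_one hf)
  · intro h k hh hk hle
    have key : ∀ m : Q, m ≤ 1 → f * m * star f ≤ p → m ≤ qAct f p := by
      intro m hm hmp
      apply le_qAct hm
      calc f * m = (f * m * star f) * f := f_mul_localize hf hm
        _ ≤ p * f := mul_mono hmp le_rfl
    have hAB : (f * h * star f) * (f * k * star f) ≤ p := by
      have e1 : h * ((star f * f) * k) = (star f * f) * (h ⊓ k) := by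
        rw [e_mul (r_le_one hf) hk,
            e_mul hh (le_trans inf_le_left (r_le_one hf) : (star f * f) ⊓ k ≤ 1),
            e_mul (r_le_one hf) (le_trans inf_le_left hh : h ⊓ k ≤ 1),
            inf_left_comm]
      have h1 : (f * h * star f) * (f * k * star f) = f * (h ⊓ k) * star f := by
        calc (f * h * star f) * (f * k * star f)
            = f * (h * ((star f * f) * k)) * star f := by simp [mul_assoc]
          _ = f * ((star f * f) * (h ⊓ k)) * star f := by rw [e1]
          _ = f * (h ⊓ k) * star f := by rw [← mul_assoc f, f_mul_r hf]
      rw [h1]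
      have h2 : f * (h ⊓ k) ≤ p * f :=
        le_trans (mul_mono le_rfl hle) (mul_qAct_le f p)
      calc f * (h ⊓ k) * star f ≤ (p * f) * star f := mul_mono h2 le_rfl
        _ = p * (f * star f) := by rw [mul_assoc]
        _ = p ⊓ (f * star f) := e_mul hp1 (d_le_one hf)
        _ ≤ p := inf_le_left
    rcases hp.2.2 _ _ (conj_le_one hf hh) (conj_le_one hf hk)
        (le_of_eq_of_le (e_mul (conj_le_one hf hh) (conj_le_one hf hk)).symm hAB) with hc | hc
    · exact Or.inl (key h hh hc)
    · exact Or.inr (key k hk hc)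

lemma qAct_unique {f p q' : Q} (hp : IsPrimeE p) (hf : IsPU f) (hd : ¬ f * star f ≤ p)
    (hq' : IsPrimeE q') (heq : p * f = f * q') : q' = qAct f p := by
  apply le_antisymm
  · exact le_qAct hq'.1 (le_of_eq heq.symm)
  · have h1 : (star f * f) ⊓ qAct f p ≤ q' := by
      have : f * qAct f p ≤ f * q' := heq ▸ mul_qAct_le f p
      calc (star f * f) ⊓ qAct f p = (star f * f) * qAct f p :=
            (e_mul (r_le_one hf) (qAct_le_one f p)).symm
        _ = star f * (f * qAct f p) := by rw [mul_assoc]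
        _ ≤ star f * (f * q') := mul_mono le_rfl this
        _ = (star f * f) * q' := by rw [mul_assoc]
        _ = (star f * f) ⊓ q' := e_mul (r_le_one hf) hq'.1
        _ ≤ q' := inf_le_right
    rcases hq'.2.2 _ _ (r_le_one hf) (qAct_le_one f p) h1 with hc | hc
    · exfalso
      apply f_le_pf_absurd hp.1 hf hd
      calc f = f * (star f * f) := (f_mul_r hf).symm
        _ ≤ f * q' := mul_mono le_rfl hc
        _ = p * f := heq.symm
    · exact hc

end SGF
namespace SGF
variable {Q : Type*} [SGFQuantale Q]

lemma star_qAct_spec {f p : Q} (hp : p ≤ 1) (hf : IsPU f) :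
    star f * p = qAct f p * star f := by
  have h := congrArg star (qAct_spec hp hf)
  rw [star_mul, star_mul, e_star hp, e_star (qAct_le_one f p)] at h
  exact h

lemma qAct_conj_le {g p m : Q} (hp : p ≤ 1) (hg : IsPU g) (h : m ≤ qAct g p) :
    g * m * star g ≤ p := by
  calc g * m * star g ≤ g * qAct g p * star g := mul_mono (mul_mono le_rfl h) le_rfl
    _ = (p * g) * star g := by rw [← qAct_spec hp hg]
    _ = p * (g * star g) := by rw [mul_assoc]
    _ = p ⊓ (g * star g) := e_mul hp (d_le_one hg)
    _ ≤ p := inf_le_left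

lemma conj_le_prime {f p m : Q} (hp : p ≤ 1) (hf : IsPU f) (hm : m ≤ 1)
    (h : f * m * star f ≤ p) : (star f * f) ⊓ m ≤ qAct f p := by
  rw [← conj_back hf hm]
  calc star f * (f * m * star f) * f ≤ star f * p * f := mul_mono (mul_mono le_rfl h) le_rfl
    _ = (qAct f p * star f) * f := by rw [star_qAct_spec hp hf]
    _ = qAct f p * (star f * f) := mul_assoc _ _ _
    _ = qAct f p ⊓ (star f * f) := e_mul (qAct_le_one f p) (r_le_one hf)
    _ ≤ qAct f p := inf_le_left

lemma conj_not_le_p {f p m : Q} (hp : IsPrimeE p) (hf : IsPU f) (hd : ¬ f * star f ≤ p)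
    (hm : m ≤ 1) (hmq : ¬ m ≤ qAct f p) : ¬ f * m * star f ≤ p := by
  intro h
  have hc := conj_le_prime hp.1 hf hm h
  rcases (qAct_prime hp hf hd).2.2 _ _ (r_le_one hf) hm hc with hc' | hc'
  · exact r_not_le_qAct hp.1 hf hd hc'
  · exact hmq hc'

lemma sandwich_d {g h : Q} (hg : IsPU g) (hh : h ≤ 1) (hhd : h ≤ g * star g) :
    g * (star g * h * g) * star g = h := by
  have hc := conj_back (f := star g) (pu_star hg) hh
  rw [star_star] at hc
  rw [hc]
  exact inf_eq_right.mpr hhd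

lemma qAct_rev_not_le {f p h : Q} (hp : p ≤ 1) (hf : IsPU f) (hh : h ≤ 1)
    (hhd : h ≤ f * star f) (hhp : ¬ h ≤ p) : ¬ star f * h * f ≤ qAct f p := by
  intro hc
  apply hhp
  rw [← sandwich_d hf hh hhd]
  exact qAct_conj_le hp hf hc

lemma inc_d_not_le {p f g : Q} (hinc : Incident p f g) :
    ¬ f * star f ≤ p ∧ ¬ g * star g ≤ p := by
  obtain ⟨h, hhd, hhp, -⟩ := hinc
  exact ⟨fun c => hhp (le_trans (le_trans hhd inf_le_left) c),
         fun c => hhp (le_trans (le_trans hhd inf_le_right) c)⟩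

lemma inc_of_le_top {p f g h : Q} (hp : p ≤ 1) (hf : IsPU f) (hg : IsPU g)
    (hhd : h ≤ (f * star f) ⊓ (g * star g)) (hhp : ¬ h ≤ p)
    (hle : h * f ≤ p * ⊤ ⊔ g) : Incident p f g := by
  have h1 : h ≤ 1 := le_trans (le_trans hhd inf_le_left) (d_le_one hf)
  have h2 := SGFQuantale.sgf3 (h * f) g p (pu_mul (pu_of_le_one h1) hf) hg hp hle
  refine ⟨h, hhd, hhp, le_trans h2 (sup_le ?_ le_sup_right)⟩
  calc p * (h * f) = (p * h) * f := by rw [mul_assoc]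
    _ ≤ (p * 1) * f := mul_mono (mul_mono le_rfl h1) le_rfl
    _ = p * f := by rw [mul_one]
    _ ≤ p * f ⊔ g := le_sup_left

lemma inc_refl {p f : Q} (hf : IsPU f) (hd : ¬ f * star f ≤ p) : Incident p f f :=
  ⟨f * star f, le_inf le_rfl le_rfl, hd, by
    rw [d_mul_f hf]; exact le_sup_right⟩

lemma inc_symm {p f g : Q} (hp : IsPrimeE p) (hf : IsPU f) (hg : IsPU g)
    (hinc : Incident p f g) : Incident p g f := by
  obtain ⟨h, hhd, hhp, hle⟩ := hinc
  have hdg : ¬ g * star g ≤ p := (inc_d_not_le ⟨h, hhd, hhp, hle⟩).2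
  have h1 : h ≤ 1 := le_trans (le_trans hhd inf_le_left) (d_le_one hf)
  set q := qAct g p with hq
  have hq1 : q ≤ 1 := qAct_le_one g p
  have hspec : p * g = g * q := qAct_spec hp.1 hg
  -- Step 1 : h ≤ p⊤ ⊔ g f*
  have s1 : h ≤ p * ⊤ ⊔ g * star f := by
    have e0 : h = (h * f) * star f := by
      rw [mul_assoc, e_mul h1 (d_le_one hf), inf_eq_left.mpr (le_trans hhd inf_le_left)]
    rw [e0]
    calc (h * f) * star f ≤ (p * f ⊔ g) * star f := mul_mono hle le_rfl
      _ = (p * f) * star f ⊔ g * star f := sup_mul _ _ _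
      _ ≤ p * ⊤ ⊔ g * star f := by
          apply sup_le _ le_sup_right
          apply le_trans _ (le_sup_left : p * ⊤ ≤ _)
          rw [mul_assoc]; exact mul_mono le_rfl le_top
  -- Step 2 : star
  have s2 : h ≤ ⊤ * p ⊔ f * star g := by
    have := star_mono s1
    rwa [e_star h1, star_sup, star_mul, star_mul, star_star, star_top, e_star hp.1] at this
  -- Step 3 : multiply by g on the right
  have s3 : h * g ≤ ⊤ * q ⊔ f := by
    calc h * g ≤ (⊤ * p ⊔ f * star g) * g := mul_mono s2 le_rfl
      _ = (⊤ * p) * g ⊔ (f * star g) * g := sup_mul _ _ _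
      _ ≤ ⊤ * q ⊔ f := by
          apply sup_le
          · calc (⊤ * p) * g = ⊤ * (g * q) := by rw [mul_assoc, hspec]
              _ = (⊤ * g) * q := by rw [mul_assoc]
              _ ≤ ⊤ * q := mul_mono le_top le_rfl
              _ ≤ ⊤ * q ⊔ f := le_sup_left
          · rw [mul_assoc]
            exact le_trans (le_trans (mul_mono le_rfl (r_le_one hg)) (le_of_eq (mul_one f))) le_sup_right
  -- Step 4 : right-handed SGF3
  have s4 : h * g ≤ p * ⊤ ⊔ f := by
    have h4 := sgf3r (pu_mul (pu_of_le_one h1) hg) hf hq1 s3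
    refine le_trans h4 (sup_le ?_ le_sup_right)
    calc (h * g) * q = h * (g * q) := mul_assoc _ _ _
      _ = h * (p * g) := by rw [hspec]
      _ = (h * p) * g := by rw [mul_assoc]
      _ = (p ⊓ h) * g := by rw [e_mul h1 hp.1, inf_comm]
      _ ≤ p * ⊤ := mul_mono inf_le_left le_top
      _ ≤ p * ⊤ ⊔ f := le_sup_left
  exact inc_of_le_top hp.1 hg hf (le_trans hhd (by rw [inf_comm])) hhp s4

lemma inc_trans {p f g k : Q} (hp : IsPrimeE p) (hf : IsPU f) (hg : IsPU g) (hk : IsPU k)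
    (h1 : Incident p f g) (h2 : Incident p g k) : Incident p f k := by
  obtain ⟨h₁, hd₁, hp₁, hle₁⟩ := h1
  obtain ⟨h₂, hd₂, hp₂, hle₂⟩ := h2
  have h₁1 : h₁ ≤ 1 := le_trans (le_trans hd₁ inf_le_left) (d_le_one hf)
  have h₂1 : h₂ ≤ 1 := le_trans (le_trans hd₂ inf_le_left) (d_le_one hg)
  refine inc_of_le_top hp.1 hf hk
    (le_inf (le_trans (le_of_eq (e_mul h₂1 h₁1)) (le_trans inf_le_right (le_trans hd₁ inf_le_left)))
            (le_trans (le_of_eq (e_mul h₂1 h₁1)) (le_trans inf_le_left (le_trans hd₂ inf_le_right))))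
    ?_ ?_
  · intro hc
    rw [e_mul h₂1 h₁1] at hc
    rcases hp.2.2 _ _ h₂1 h₁1 hc with hc' | hc'
    · exact hp₂ hc'
    · exact hp₁ hc'
  · calc (h₂ * h₁) * f = h₂ * (h₁ * f) := mul_assoc _ _ _
      _ ≤ h₂ * (p * f ⊔ g) := mul_mono le_rfl hle₁
      _ = h₂ * (p * f) ⊔ h₂ * g := mul_sup _ _ _
      _ ≤ p * ⊤ ⊔ k := by
          apply sup_le
          · calc h₂ * (p * f) = (h₂ * p) * f := by rw [mul_assoc]
              _ = (p ⊓ h₂) * f := by rw [e_mul h₂1 hp.1, inf_comm]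
              _ ≤ p * ⊤ := mul_mono inf_le_left le_top
              _ ≤ p * ⊤ ⊔ k := le_sup_left
          · calc h₂ * g ≤ p * g ⊔ k := hle₂
              _ ≤ p * ⊤ ⊔ k := sup_le (le_trans (mul_mono le_rfl le_top) le_sup_left) le_sup_right

lemma act_eq_aux {p f g : Q} (hp : IsPrimeE p) (hf : IsPU f) (hg : IsPU g)
    (hinc : Incident p f g) : qAct f p ≤ qAct g p := by
  obtain ⟨h', hhd, hhp, hle⟩ := inc_symm hp hf hg hinc
  have hdg : ¬ g * star g ≤ p := (inc_d_not_le hinc).2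
  have h'1 : h' ≤ 1 := le_trans (le_trans hhd inf_le_left) (d_le_one hg)
  have h'dg : h' ≤ g * star g := le_trans hhd inf_le_left
  set qf := qAct f p
  set qg := qAct g p
  have hqf1 : qf ≤ 1 := qAct_le_one f p
  have hm1 : star g * h' * g ≤ 1 := by
    have := conj_le_one (pu_star hg) h'1
    rwa [star_star] at this
  -- g * ((star g * h' * g) * qf) ≤ p * g
  have key : (star g * h' * g) * qf ≤ qg := by
    apply le_qAct (le_trans (mul_mono hm1 hqf1) (le_of_eq (one_mul 1)))
    have e1 : g * ((star g * h' * g) * qf) = (h' * g) * qf := by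
      calc g * ((star g * h' * g) * qf) = ((g * star g) * h') * (g * qf) := by simp [mul_assoc]
        _ = h' * (g * qf) := by
            rw [e_mul (d_le_one hg) h'1, inf_eq_right.mpr h'dg]
        _ = (h' * g) * qf := by rw [mul_assoc]
    have e2 : (h' * g) * qf ≤ p * ⊤ := by
      calc (h' * g) * qf ≤ (p * g ⊔ f) * qf := mul_mono hle le_rfl
        _ = (p * g) * qf ⊔ f * qf := sup_mul _ _ _
        _ ≤ p * ⊤ := by
            apply sup_le
            · rw [mul_assoc]; exact mul_mono le_rfl le_top
            · exact le_trans (mul_qAct_le f p) (mul_mono le_rfl le_top)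
    have e3 : g * ((star g * h' * g) * qf) ≤ g ⊓ p * ⊤ := by
      refine le_inf ?_ (by rw [e1]; exact e2)
      calc g * ((star g * h' * g) * qf) ≤ g * (1 * 1) :=
            mul_mono le_rfl (mul_mono hm1 hqf1)
        _ = g := by rw [one_mul, mul_one]
    exact le_trans e3 (locality hp.1 g)
  have key2 : (star g * h' * g) ⊓ qf ≤ qg := by
    rw [← e_mul hm1 hqf1]; exact key
  rcases (qAct_prime hp hg hdg).2.2 _ _ hm1 hqf1 key2 with hc | hc
  · exfalso
    apply hhp
    rw [← sandwich_d hg h'1 h'dg]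
    exact qAct_conj_le hp.1 hg hc
  · exact hc

lemma act_eq {p f g : Q} (hp : IsPrimeE p) (hf : IsPU f) (hg : IsPU g)
    (hinc : Incident p f g) : qAct f p = qAct g p :=
  le_antisymm (act_eq_aux hp hf hg hinc) (act_eq_aux hp hg hf (inc_symm hp hf hg hinc))

end SGF
namespace SGF
variable {Q : Type*} [SGFQuantale Q]

lemma inc_star {p f g : Q} (hp : IsPrimeE p) (hf : IsPU f) (hg : IsPU g)
    (hinc : Incident p f g) : Incident (qAct f p) (star f) (star g) := by
  obtain ⟨h, hhd, hhp, hle⟩ := hinc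
  have hdf : ¬ f * star f ≤ p := (inc_d_not_le ⟨h, hhd, hhp, hle⟩).1
  have hdg : ¬ g * star g ≤ p := (inc_d_not_le ⟨h, hhd, hhp, hle⟩).2
  have h1 : h ≤ 1 := le_trans (le_trans hhd inf_le_left) (d_le_one hf)
  have hhdf : h ≤ f * star f := le_trans hhd inf_le_left
  set q := qAct f p with hqdef
  have s1 : star f * h ≤ q * star f ⊔ star g := by
    have hs := star_mono hle
    rw [star_mul, e_star h1, star_sup, star_mul, e_star hp.1,
        star_qAct_spec hp.1 hf] at hs
    exact hs
  have hm1 : star f * h * f ≤ 1 := by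
    have := conj_le_one (pu_star hf) h1
    rwa [star_star] at this
  have e_h₃ : (star f * h * f) * star f = star f * h := by
    calc (star f * h * f) * star f = star f * (h * (f * star f)) := by simp [mul_assoc]
      _ = star f * (h ⊓ (f * star f)) := by rw [e_mul h1 (d_le_one hf)]
      _ = star f * h := by rw [inf_eq_left.mpr hhdf]
  refine ⟨(star f * h * f) ⊓ (star g * g), ?_, ?_, ?_⟩
  · rw [star_star, star_star]
    refine le_inf (le_trans inf_le_left ?_) inf_le_right
    calc star f * h * f ≤ star f * 1 * f := mul_mono (mul_mono le_rfl h1) le_rfl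
      _ = star f * f := by rw [mul_one]
  · intro hc
    rcases (qAct_prime hp hf hdf).2.2 _ _ hm1 (r_le_one hg) hc with hc' | hc'
    · exact qAct_rev_not_le hp.1 hf h1 hhdf hhp hc'
    · rw [act_eq hp hf hg ⟨h, hhd, hhp, hle⟩] at hc'
      exact r_not_le_qAct hp.1 hg hdg hc'
  · calc ((star f * h * f) ⊓ (star g * g)) * star f ≤ (star f * h * f) * star f :=
        mul_mono inf_le_left le_rfl
      _ = star f * h := e_h₃
      _ ≤ q * star f ⊔ star g := s1

lemma inc_mul {p f' f₀ g' g₀ : Q} (hp : IsPrimeE p)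
    (hf' : IsPU f') (hf₀ : IsPU f₀) (hg' : IsPU g') (hg₀ : IsPU g₀)
    (hinc1 : Incident p f' f₀) (hinc2 : Incident (qAct f₀ p) g' g₀)
    (hD₀ : ¬ (f₀ * g₀) * star (f₀ * g₀) ≤ p) :
    Incident p (f' * g') (f₀ * g₀) := by
  set q := qAct f₀ p with hqdef
  have hdf' : ¬ f' * star f' ≤ p := (inc_d_not_le hinc1).1
  have hdf₀ : ¬ f₀ * star f₀ ≤ p := (inc_d_not_le hinc1).2
  have hdg' : ¬ g' * star g' ≤ q := (inc_d_not_le hinc2).1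
  obtain ⟨h₁, hd₁, hp₁, hle₁⟩ := hinc1
  obtain ⟨h₂, hd₂, hp₂, hle₂⟩ := hinc2
  have h₁1 : h₁ ≤ 1 := le_trans (le_trans hd₁ inf_le_left) (d_le_one hf')
  have h₂1 : h₂ ≤ 1 := le_trans (le_trans hd₂ inf_le_left) (d_le_one hg')
  set h' := f₀ * h₂ * star f₀ with h'def
  have h'1 : h' ≤ 1 := conj_le_one hf₀ h₂1
  have claimA : h' * (f₀ * g') ≤ p * ⊤ ⊔ f₀ * g₀ := by
    have e1 : h' * (f₀ * g') = f₀ * ((h₂ * (star f₀ * f₀)) * g') := by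
      rw [h'def]; simp [mul_assoc]
    rw [e1]
    calc f₀ * ((h₂ * (star f₀ * f₀)) * g')
        ≤ f₀ * ((h₂ * 1) * g') := mul_mono le_rfl (mul_mono (mul_mono le_rfl (r_le_one hf₀)) le_rfl)
      _ = f₀ * (h₂ * g') := by rw [mul_one]
      _ ≤ f₀ * (q * g' ⊔ g₀) := mul_mono le_rfl hle₂
      _ = f₀ * (q * g') ⊔ f₀ * g₀ := mul_sup _ _ _
      _ ≤ p * ⊤ ⊔ f₀ * g₀ := by
          apply sup_le _ le_sup_right
          apply le_trans _ (le_sup_left : p * ⊤ ≤ _)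
          calc f₀ * (q * g') = (f₀ * q) * g' := by rw [mul_assoc]
            _ = (p * f₀) * g' := by rw [← qAct_spec hp.1 hf₀]
            _ = p * (f₀ * g') := by rw [mul_assoc]
            _ ≤ p * ⊤ := mul_mono le_rfl le_top
  set D' := (f' * g') * star (f' * g') with D'def
  set D₀ := (f₀ * g₀) * star (f₀ * g₀) with D₀def
  have hD'1 : D' ≤ 1 := d_le_one (pu_mul hf' hg')
  have hD₀1 : D₀ ≤ 1 := d_le_one (pu_mul hf₀ hg₀)
  refine inc_of_le_top hp.1 (pu_mul hf' hg') (pu_mul hf₀ hg₀)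
    (inf_le_right : (h₁ ⊓ h') ⊓ (D' ⊓ D₀) ≤ _) ?_ ?_
  · -- not below p
    intro hc
    rcases hp.2.2 _ _ (le_trans inf_le_left h₁1) (le_trans inf_le_left hD'1) hc with hc1 | hc1
    · rcases hp.2.2 _ _ h₁1 h'1 hc1 with hc2 | hc2
      · exact hp₁ hc2
      · exact conj_not_le_p hp hf₀ hdf₀ h₂1 hp₂ hc2
    · rcases hp.2.2 _ _ hD'1 hD₀1 hc1 with hc2 | hc2
      · have eD' : D' = f' * (g' * star g') * star f' := by
          rw [D'def, star_mul]; simp [mul_assoc]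
        have hdg'q : ¬ g' * star g' ≤ qAct f' p := by
          rw [act_eq hp hf' hf₀ ⟨h₁, hd₁, hp₁, hle₁⟩]
          exact hdg'
        exact conj_not_le_p hp hf' hdf' (d_le_one hg') hdg'q (eD' ▸ hc2)
      · exact hD₀ hc2
  · -- the inequality
    have hmeet : (h₁ ⊓ h') ⊓ (D' ⊓ D₀) ≤ h' * h₁ := by
      rw [e_mul h'1 h₁1, inf_comm h' h₁]
      exact inf_le_left
    calc ((h₁ ⊓ h') ⊓ (D' ⊓ D₀)) * (f' * g') ≤ (h' * h₁) * (f' * g') :=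
          mul_mono hmeet le_rfl
      _ = h' * ((h₁ * f') * g') := by simp [mul_assoc]
      _ ≤ h' * ((p * f' ⊔ f₀) * g') := mul_mono le_rfl (mul_mono hle₁ le_rfl)
      _ = h' * ((p * f') * g') ⊔ h' * (f₀ * g') := by rw [sup_mul, mul_sup]
      _ ≤ p * ⊤ ⊔ f₀ * g₀ := by
          apply sup_le _ claimA
          apply le_trans _ (le_sup_left : p * ⊤ ≤ _)
          calc h' * ((p * f') * g') = (h' * p) * (f' * g') := by simp [mul_assoc]
            _ = (p ⊓ h') * (f' * g') := by rw [e_mul h'1 hp.1, inf_comm]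
            _ ≤ p * ⊤ := mul_mono inf_le_left le_top

end SGF
namespace SGF
variable {Q : Type*} [SGFQuantale Q]

lemma le_Ibig {p f g : Q} (hg : IsPU g)
    (hcond : g * star g ≤ p ∨ ¬ Incident p g f) : g ≤ Ibig p f :=
  le_sSup ⟨hg, hcond⟩

lemma Ibig_eq_of_inc {p f g : Q} (hp : IsPrimeE p) (hf : IsPU f) (hg : IsPU g)
    (hinc : Incident p f g) : Ibig p f = Ibig p g := by
  unfold Ibig
  congr 1
  ext k
  simp only [Set.mem_setOf_eq]
  constructor
  · rintro ⟨hk, hc⟩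
    refine ⟨hk, ?_⟩
    rcases hc with hc | hc
    · exact Or.inl hc
    · exact Or.inr (fun hi => hc (inc_trans hp hk hg hf hi (inc_symm hp hf hg hinc)))
  · rintro ⟨hk, hc⟩
    refine ⟨hk, ?_⟩
    rcases hc with hc | hc
    · exact Or.inl hc
    · exact Or.inr (fun hi => hc (inc_trans hp hk hf hg hi hinc))

end SGF

/-- The pair `(p, I_{[p,f]})` only depends on the class of `(p,f)`. -/
def pIbigFun (Q : Type*) [SGFQuantale Q] : Quot (IncRel Q) → Q × Q :=
  Quot.lift (fun x : IncDom Q => (x.1.1, Ibig x.1.1 x.1.2)) (by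
    rintro a b ⟨hpq, hinc⟩
    have h1 : Ibig a.1.1 a.1.2 = Ibig a.1.1 b.1.2 :=
      SGF.Ibig_eq_of_inc a.2.1 a.2.2.1 b.2.2.1 hinc
    rw [Prod.mk.injEq]
    exact ⟨hpq, by rw [h1, hpq]⟩)

namespace SGF
variable {Q : Type*} [SGFQuantale Q]

lemma quot_eq {Q : Type*} [SGFQuantale Q] {x y : IncDom Q}
    (h : Quot.mk (IncRel Q) x = Quot.mk (IncRel Q) y) :
    x.1.1 = y.1.1 ∧ Ibig x.1.1 x.1.2 = Ibig y.1.1 y.1.2 := by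
  have h2 := congrArg (pIbigFun Q) h
  have h3 : (x.1.1, Ibig x.1.1 x.1.2) = (y.1.1, Ibig y.1.1 y.1.2) := h2
  exact ⟨(Prod.ext_iff.mp h3).1, (Prod.ext_iff.mp h3).2⟩

lemma exists_of_not_le_Ibig {p f a : Q} (h : ¬ a ≤ Ibig p f) :
    ∃ g : Q, IsPU g ∧ g ≤ a ∧ ¬ g * star g ≤ p ∧ Incident p g f := by
  obtain ⟨g, hg, hga, hgn⟩ := exists_pu_not_le h
  refine ⟨g, hg, hga, ?_, ?_⟩
  · intro hc; exact hgn (le_Ibig hg (Or.inl hc))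
  · by_contra hc; exact hgn (le_Ibig hg (Or.inr hc))

lemma not_le_Ibig_of
    (hsp1 : ∀ p f : Q, IsPrimeE p → IsPU f → ¬ f * star f ≤ p → ¬ f ≤ Ibig p f)
    {p f g a : Q} (hp : IsPrimeE p) (hf : IsPU f)
    (hg : IsPU g) (hga : g ≤ a) (hgd : ¬ g * star g ≤ p) (hginc : Incident p g f) :
    ¬ a ≤ Ibig p f := by
  intro hc
  have h1 : Ibig p g = Ibig p f := Ibig_eq_of_inc hp hg hf hginc
  exact hsp1 p g hp hg hgd (by rw [h1]; exact le_trans hga hc)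

lemma mul_le_of_pu {a b c : Q}
    (h : ∀ f g : Q, IsPU f → f ≤ a → IsPU g → g ≤ b → f * g ≤ c) : a * b ≤ c := by
  conv_lhs => rw [sgf1' a]
  rw [Sup_mul]
  apply iSup_le; intro f; apply iSup_le; intro hf
  conv_lhs => rw [sgf1' b]
  rw [mul_Sup]
  apply iSup_le; intro g; apply iSup_le; intro hg
  exact h f g hf.1 hf.2 hg.1 hg.2

lemma exists_pu2_not_le {a b c : Q} (h : ¬ a * b ≤ c) :
    ∃ f g : Q, IsPU f ∧ f ≤ a ∧ IsPU g ∧ g ≤ b ∧ ¬ f * g ≤ c := by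
  by_contra hc
  push_neg at hc
  exact h (mul_le_of_pu fun f g hf hfa hg hgb => hc f g hf hfa hg hgb)

end SGF
open SGF in
/-- For every spatial SGF-quantale, the canonical map `α` preserves arbitrary
joins, is injective, preserves multiplication and involution, sends the top to
all of `G₁ = I/∼` and the unit `e` to the set of units `u[G₀]`; hence it is a
strong strictly unital embedding of unital involutive quantales. -/
theorem stmt19 (Q : Type*) [SGFQuantale Q] (hsp : IsSpatial Q) :
    (∀ S : Set Q, alphaMap Q (sSup S) = ⋃ a ∈ S, alphaMap Q a) ∧
    Function.Injective (alphaMap Q) ∧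
    (∀ a b : Q, alphaMap Q (a * b) = qMul Q (alphaMap Q a) (alphaMap Q b)) ∧
    (∀ a : Q, alphaMap Q (star a) = qStar Q (alphaMap Q a)) ∧
    alphaMap Q ⊤ = Set.univ ∧
    alphaMap Q 1 = {z | ∃ x : IncDom Q, x.1.2 = 1 ∧ z = Quot.mk (IncRel Q) x} := by
  obtain ⟨spq1, spq2⟩ := hsp
  refine ⟨?_, ?_, ?_, ?_, ?_, ?_⟩
  · -- joins
    intro S
    ext z
    simp only [alphaMap, Set.mem_iUnion, Set.mem_setOf_eq, exists_prop]
    constructor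
    · rintro ⟨x, rfl, hx⟩
      have h1 : ∃ a ∈ S, ¬ a ≤ Ibig x.1.1 x.1.2 := by
        by_contra hc; push_neg at hc
        exact hx (sSup_le hc)
      obtain ⟨a, haS, ha⟩ := h1
      exact ⟨a, haS, x, rfl, ha⟩
    · rintro ⟨a, haS, x, rfl, ha⟩
      exact ⟨x, rfl, fun c => ha (le_trans (le_sSup haS) c)⟩
  · -- injectivity
    intro a b hab
    have main : ∀ u v : Q, alphaMap Q u = alphaMap Q v →
        ∀ p f : Q, ∀ hp : IsPrimeE p, ∀ hf : IsPU f, ∀ hd : ¬ f * star f ≤ p,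
        ¬ u ≤ Ibig p f → ¬ v ≤ Ibig p f := by
      intro u v huv p f hp hf hd hu
      have hz : (Quot.mk (IncRel Q) ⟨(p, f), hp, hf, hd⟩) ∈ alphaMap Q u :=
        ⟨⟨(p, f), hp, hf, hd⟩, rfl, hu⟩
      rw [huv] at hz
      obtain ⟨y, hy, hv⟩ := hz
      have h2 := (quot_eq hy).2
      intro c
      exact hv (le_trans c (le_of_eq h2))
    have hset : {x : Q | ∃ p f : Q, IsPrimeE p ∧ IsPU f ∧ ¬ f * star f ≤ p ∧
          x = Ibig p f ∧ a ≤ x}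
        = {x : Q | ∃ p f : Q, IsPrimeE p ∧ IsPU f ∧ ¬ f * star f ≤ p ∧
          x = Ibig p f ∧ b ≤ x} := by
      ext x
      simp only [Set.mem_setOf_eq]
      constructor
      · rintro ⟨p, f, hp, hf, hd, rfl, hax⟩
        refine ⟨p, f, hp, hf, hd, rfl, ?_⟩
        by_contra hbx
        exact (main b a hab.symm p f hp hf hd hbx) hax
      · rintro ⟨p, f, hp, hf, hd, rfl, hbx⟩
        refine ⟨p, f, hp, hf, hd, rfl, ?_⟩
        by_contra hax
        exact (main a b hab p f hp hf hd hax) hbx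
    have h3 := spq2 a
    rw [hset, ← spq2 b] at h3
    exact h3
  · -- multiplication
    intro a b
    ext z
    constructor
    · rintro ⟨w, rfl, hne⟩
      obtain ⟨f', g', hf', hfa, hg', hgb, hfg⟩ := exists_pu2_not_le hne
      have hcgood : ¬ ((f' * g') * star (f' * g') ≤ w.1.1 ∨
          ¬ Incident w.1.1 (f' * g') w.1.2) := by
        intro hc; exact hfg (le_Ibig (pu_mul hf' hg') hc)
      have hdc : ¬ (f' * g') * star (f' * g') ≤ w.1.1 := fun c => hcgood (Or.inl c)
      have hinc : Incident w.1.1 (f' * g') w.1.2 := by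
        by_contra hc; exact hcgood (Or.inr hc)
      have hDeq : (f' * g') * star (f' * g') = f' * (g' * star g') * star f' := by
        rw [star_mul]; simp [mul_assoc]
      have hdf' : ¬ f' * star f' ≤ w.1.1 := by
        intro c; apply hdc
        refine le_trans ?_ c
        calc (f' * g') * star (f' * g') = f' * (g' * star g') * star f' := hDeq
          _ ≤ f' * 1 * star f' := mul_mono (mul_mono le_rfl (d_le_one hg')) le_rfl
          _ = f' * star f' := by rw [mul_one]
      have hdg' : ¬ g' * star g' ≤ qAct f' w.1.1 := by
        intro c
        exact hdc (by rw [hDeq]; exact qAct_conj_le w.2.1.1 hf' c)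
      refine ⟨⟨(w.1.1, f'), w.2.1, hf', hdf'⟩,
              ⟨(qAct f' w.1.1, g'), qAct_prime w.2.1 hf' hdf', hg', hdg'⟩,
              ⟨(w.1.1, f' * g'), w.2.1, pu_mul hf' hg', hdc⟩, ?_, ?_, ?_, rfl, ?_⟩
      · exact ⟨_, rfl, not_le_Ibig_of spq1 w.2.1 hf' hf' hfa hdf' (inc_refl hf' hdf')⟩
      · exact ⟨_, rfl, not_le_Ibig_of spq1 (qAct_prime w.2.1 hf' hdf') hg' hg' hgb hdg'
          (inc_refl hg' hdg')⟩
      · exact qAct_spec w.2.1.1 hf'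
      · exact (Quot.sound ⟨rfl, hinc⟩).symm
    · rintro ⟨x, y, w, hxA, hyB, heq, hw1, rfl⟩
      obtain ⟨x', hx', hax'⟩ := hxA
      obtain ⟨y', hy', hby'⟩ := hyB
      have hna : ¬ a ≤ Ibig x.1.1 x.1.2 := by rw [(quot_eq hx').2]; exact hax'
      have hnb : ¬ b ≤ Ibig y.1.1 y.1.2 := by rw [(quot_eq hy').2]; exact hby'
      obtain ⟨f'', hf'', hfa, hfd, hfinc⟩ := exists_of_not_le_Ibig hna
      obtain ⟨g'', hg'', hgb, hgd, hginc⟩ := exists_of_not_le_Ibig hnb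
      have hq : y.1.1 = qAct x.1.2 x.1.1 :=
        qAct_unique x.2.1 x.2.2.1 x.2.2.2 y.2.1 heq
      have hw11 : w.1.1 = x.1.1 := by rw [hw1]
      have hw12 : w.1.2 = x.1.2 * y.1.2 := by rw [hw1]
      have hD : ¬ (x.1.2 * y.1.2) * star (x.1.2 * y.1.2) ≤ x.1.1 := by
        have h0 := w.2.2.2; rwa [hw11, hw12] at h0
      have hincmul : Incident x.1.1 (f'' * g'') (x.1.2 * y.1.2) :=
        inc_mul x.2.1 hf'' x.2.2.1 hg'' y.2.2.1 hfinc (by rwa [← hq]) hD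
      refine ⟨w, rfl, ?_⟩
      rw [hw11, hw12]
      exact not_le_Ibig_of spq1 x.2.1 (pu_mul x.2.2.1 y.2.2.1) (pu_mul hf'' hg'')
        (mul_mono hfa hgb) (inc_d_not_le hincmul).1 hincmul
  · -- involution
    intro a
    ext z
    constructor
    · rintro ⟨w, rfl, hne⟩
      obtain ⟨g, hgPU, hga, hgd, hginc⟩ := exists_of_not_le_Ibig hne
      have hsga : star g ≤ a := by
        have h0 := star_mono hga; rwa [star_star] at h0
      have hrg : ¬ star g * star (star g) ≤ qAct g w.1.1 := by
        rw [star_star]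
        exact r_not_le_qAct w.2.1.1 hgPU hgd
      refine ⟨⟨(qAct g w.1.1, star g), qAct_prime w.2.1 hgPU hgd, pu_star hgPU, hrg⟩,
              ⟨(w.1.1, g), w.2.1, hgPU, hgd⟩, ?_, ?_, ?_, ?_⟩
      · exact ⟨_, rfl, not_le_Ibig_of spq1 (qAct_prime w.2.1 hgPU hgd) (pu_star hgPU)
          (pu_star hgPU) hsga hrg (inc_refl (pu_star hgPU) hrg)⟩
      · exact (star_qAct_spec w.2.1.1 hgPU).symm
      · exact (star_star g).symm
      · exact (Quot.sound ⟨rfl, hginc⟩).symm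
    · rintro ⟨x, w, hxA, heq, hwf, rfl⟩
      obtain ⟨x', hx', hax'⟩ := hxA
      have hna : ¬ a ≤ Ibig x.1.1 x.1.2 := by rw [(quot_eq hx').2]; exact hax'
      obtain ⟨f', hf', hfa, hfd, hfinc⟩ := exists_of_not_le_Ibig hna
      have hq : w.1.1 = qAct x.1.2 x.1.1 :=
        qAct_unique x.2.1 x.2.2.1 x.2.2.2 w.2.1 heq
      have hstarinc : Incident (qAct x.1.2 x.1.1) (star f') (star x.1.2) := by
        have h0 := inc_star x.2.1 hf' x.2.2.1 hfinc
        rwa [act_eq x.2.1 hf' x.2.2.1 hfinc] at h0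
      have hrk : ¬ star f' * star (star f') ≤ qAct x.1.2 x.1.1 := by
        rw [star_star, ← act_eq x.2.1 hf' x.2.2.1 hfinc]
        exact r_not_le_qAct x.2.1.1 hf' hfd
      have hka : star f' ≤ star a := star_mono hfa
      refine ⟨w, rfl, ?_⟩
      rw [hwf, hq]
      exact not_le_Ibig_of spq1 (qAct_prime x.2.1 x.2.2.1 x.2.2.2) (pu_star x.2.2.1)
        (pu_star hf') hka hrk hstarinc
  · -- top
    ext z
    simp only [Set.mem_univ, iff_true, alphaMap, Set.mem_setOf_eq]
    obtain ⟨x, rfl⟩ := Quot.exists_rep z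
    exact ⟨x, rfl, fun c => spq1 x.1.1 x.1.2 x.2.1 x.2.2.1 x.2.2.2 (le_trans le_top c)⟩
  · -- unit
    ext z
    simp only [alphaMap, Set.mem_setOf_eq]
    constructor
    · rintro ⟨x, rfl, hne⟩
      obtain ⟨g, hg, hg1, hgd, hginc⟩ := exists_of_not_le_Ibig hne
      have hone : ¬ (1 : Q) * star 1 ≤ x.1.1 := by
        rw [star_one, mul_one]
        intro c
        exact x.2.1.2.1 (le_antisymm x.2.1.1 c)
      refine ⟨⟨(x.1.1, 1), x.2.1, pu_one, hone⟩, rfl, ?_⟩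
      refine (Quot.sound ⟨rfl, ?_⟩).symm
      show Incident x.1.1 (1 : Q) x.1.2
      obtain ⟨h, hhd, hhp, hle⟩ := hginc
      have hgproj := pu_le_one_proj hg hg1
      have hdg_eq : g * star g = g := by rw [hgproj.2, hgproj.1]
      have hhg : h ≤ g := by rw [← hdg_eq]; exact le_trans hhd inf_le_left
      have h1 : h ≤ 1 := le_trans hhg hg1
      refine ⟨h, le_inf (by rw [star_one, mul_one]; exact h1)
        (le_trans hhd inf_le_right), hhp, ?_⟩
      rw [mul_one]
      calc h = h * g := ((e_mul h1 hg1).trans (inf_eq_left.mpr hhg)).symm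
        _ ≤ x.1.1 * g ⊔ x.1.2 := hle
        _ ≤ x.1.1 * 1 ⊔ x.1.2 :=
            sup_le (le_trans (mul_mono le_rfl hg1) le_sup_left) le_sup_right
    · rintro ⟨x, hx2, rfl⟩
      refine ⟨x, rfl, ?_⟩
      have h0 := spq1 x.1.1 x.1.2 x.2.1 x.2.2.1 x.2.2.2
      rw [hx2] at h0
      rw [hx2]
      exact h0
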